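/- For all Schwartz functions f, g on ℝ^{2n+1}: f *₁ g = f *₀ g − Σ_{j=1}^n ∂₃(T_{1j}f *₀ T_{2j}g) + ∫₀¹ (1−θ) Σ_{j=1}^n Σ_{k=1}^n ∂₃²(T_{1j}T_{1k}f *_θ T_{2j}T_{2k}g) dθ. -/

import Mathlib

open MeasureTheory Complex Topology Filter
open scoped RealInnerProductSpace ENNReal

noncomputable section

/-- `ℝⁿ` as a Euclidean space. -/
abbrev E (n : ℕ) := EuclideanSpace ℝ (Fin n)

/-- The underlying space `ℝⁿ × ℝⁿ × ℝ` of the Heisenberg group `𝕙ⁿ`. -/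
abbrev H (n : ℕ) := E n × E n × ℝ

/-- Heisenberg multiplication. -/
def hmul {n : ℕ} (u v : H n) : H n :=
  (u.1 + v.1, u.2.1 + v.2.1, u.2.2 + v.2.2 + ⟪u.1, v.2.1⟫)

/-- Heisenberg inverse. -/
def hinv {n : ℕ} (u : H n) : H n := (-u.1, -u.2.1, -u.2.2 + ⟪u.1, u.2.1⟫)

/-- Heisenberg convolution `(F *₁ G)(u) = ∫ F(u ∘ v⁻¹) G(v) dv`. -/
def conv1 {n : ℕ} (F G : H n → ℂ) (u : H n) : ℂ := ∫ v, F (hmul u (hinv v)) * G v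

/-- The interpolated convolution
`(F *_θ G)(u) = ∫ F(u₁−v₁, u₂−v₂, u₃−v₃−θ(u₁−v₁)·v₂) G(v) dv`. -/
def convθ {n : ℕ} (θ : ℝ) (F G : H n → ℂ) (u : H n) : ℂ :=
  ∫ v, F (u.1 - v.1, u.2.1 - v.2.1, u.2.2 - v.2.2 - θ * ⟪u.1 - v.1, v.2.1⟫) * G v

/-- The partial derivative `∂₃` in the central variable `u₃`. -/
def d3 {n : ℕ} (F : H n → ℂ) (u : H n) : ℂ :=
  fderiv ℝ F u ((0 : E n), (0 : E n), (1 : ℝ))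

/-!
Put `φ θ = (f *_θ g)(u)`, so that `φ 0` and `φ 1` are the additive and the Heisenberg
convolution, and the claim is Taylor's formula `φ 1 = φ 0 + φ' 0 + ∫₀¹ (1 - θ) φ'' θ`.
The parameter enters only through the central coordinate `u₃ - v₃ - θ (u₁ - v₁)·v₂` of the
first factor, so differentiating under the integral and expanding the inner product gives
`∂_θ (F *_θ G) = -Σ_j (T_{1j} ∂₃F) *_θ T_{2j}G`. As `u ↦ u ∘_θ v⁻¹` commutes with translation
along the centre, `∂₃ (F *_θ G) = ∂₃F *_θ G`, and `∂₃` commutes with `T_{1j}`; so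
`φ' θ = -Σ_j ∂₃(T_{1j}f *_θ T_{2j}g)(u)`, and applying the same rule to each summand gives `φ''`.
-/

open SchwartzMap LineDeriv Set

theorem taylor_integral_remainder_one_of_hasDerivAt {φ φ' φ'' : ℝ → ℂ}
    (hφ : ∀ θ ∈ uIcc (0:ℝ) 1, HasDerivAt φ (φ' θ) θ)
    (hφ' : ∀ θ ∈ uIcc (0:ℝ) 1, HasDerivAt φ' (φ'' θ) θ)
    (hφ'' : ContinuousOn φ'' (uIcc 0 1)) :
    φ 1 = φ 0 + φ' 0 + ∫ θ in (0:ℝ)..1, (1 - (θ : ℂ)) * φ'' θ := by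
  have hφ'_cont : ContinuousOn φ' (uIcc 0 1) := fun θ hθ =>
    (hφ' θ hθ).continuousAt.continuousWithinAt
  have hweight : ∀ θ ∈ uIcc (0:ℝ) 1, HasDerivAt (fun θ : ℝ => 1 - (θ : ℂ)) (-1) θ :=
    fun θ _ => by simpa using ((hasDerivAt_id θ).ofReal_comp).const_sub 1
  rw [intervalIntegral.integral_mul_deriv_eq_deriv_mul hweight hφ'
    (continuous_const.intervalIntegrable 0 1) hφ''.intervalIntegrable]
  simp [intervalIntegral.integral_neg,
    intervalIntegral.integral_eq_sub_of_hasDerivAt hφ hφ'_cont.intervalIntegrable]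
  ring

theorem SchwartzMap.lineDerivOp_smulLeftCLM_of_apply_eq_zero {V F : Type*}
    [NormedAddCommGroup V] [NormedSpace ℝ V] [NormedAddCommGroup F] [NormedSpace ℝ F]
    (ℓ : V →L[ℝ] ℝ) {m : V} (hm : ℓ m = 0) (f : 𝓢(V, F)) :
    ∂_{m} (smulLeftCLM F ⇑ℓ f) = smulLeftCLM F ⇑ℓ (∂_{m} f) := by
  ext x
  have hℓ := ℓ.hasTemperateGrowth
  rw [lineDerivOp_apply_eq_fderiv, smulLeftCLM_apply hℓ, smulLeftCLM_apply_apply hℓ,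
    lineDerivOp_apply_eq_fderiv, (ℓ.hasFDerivAt.fun_smul (f.hasFDerivAt x)).fderiv]
  simp [hm]

theorem SchwartzMap.integrable_affine_mul_pow_mul_norm {D V : Type*} [NormedAddCommGroup D]
    [NormedSpace ℝ D] [FiniteDimensional ℝ D] [MeasurableSpace D] [BorelSpace D]
    [NormedAddCommGroup V] [NormedSpace ℝ V] {μ : Measure D} [μ.HasTemperateGrowth]
    (G : 𝓢(D, V)) (a b : ℝ) (k : ℕ) :
    Integrable (fun v => (a + b * ‖v‖) * (‖v‖ ^ k * ‖G v‖)) μ := by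
  refine (((G.integrable_pow_mul μ k).const_mul a).add
    ((G.integrable_pow_mul μ (k + 1)).const_mul b)).congr (ae_of_all _ fun v => ?_)
  simp only [Pi.add_apply, pow_succ]
  ring

namespace Heisenberg

variable {n : ℕ}

instance : (volume : Measure (E n × ℝ)).IsAddHaarMeasure :=
  Measure.prod.instIsAddHaarMeasure _ _

instance : (volume : Measure (H n)).IsAddHaarMeasure := Measure.prod.instIsAddHaarMeasure _ _

def e₃ (n : ℕ) : H n := (0, 0, 1)

lemma norm_e₃ : ‖e₃ n‖ = 1 := by simp [e₃]

lemma d3_apply (F : H n → ℂ) (u : H n) : d3 F u = fderiv ℝ F u (e₃ n) := rfl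

def coord₁ (j : Fin n) : H n →L[ℝ] ℝ :=
  (EuclideanSpace.proj j).comp (.fst ℝ (E n) (E n × ℝ))

def coord₂ (j : Fin n) : H n →L[ℝ] ℝ :=
  (EuclideanSpace.proj j).comp
    ((ContinuousLinearMap.fst ℝ (E n) ℝ).comp (.snd ℝ (E n) (E n × ℝ)))

def T₁ (j : Fin n) : 𝓢(H n, ℂ) →L[ℝ] 𝓢(H n, ℂ) := smulLeftCLM ℂ ⇑(coord₁ j)

def T₂ (j : Fin n) : 𝓢(H n, ℂ) →L[ℝ] 𝓢(H n, ℂ) := smulLeftCLM ℂ ⇑(coord₂ j)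

lemma coe_T₁ (j : Fin n) (f : 𝓢(H n, ℂ)) : ⇑(T₁ j f) = fun w => (w.1 j : ℂ) * f w := by
  ext w
  rw [T₁, smulLeftCLM_apply_apply (coord₁ j).hasTemperateGrowth]
  simp [coord₁, Complex.real_smul]

lemma coe_T₂ (j : Fin n) (f : 𝓢(H n, ℂ)) : ⇑(T₂ j f) = fun w => (w.2.1 j : ℂ) * f w := by
  ext w
  rw [T₂, smulLeftCLM_apply_apply (coord₂ j).hasTemperateGrowth]
  simp [coord₂, Complex.real_smul]

lemma lineDerivOp_e₃_T₁ (j : Fin n) (f : 𝓢(H n, ℂ)) :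
    ∂_{e₃ n} (T₁ j f) = T₁ j (∂_{e₃ n} f) :=
  lineDerivOp_smulLeftCLM_of_apply_eq_zero _ (by simp [coord₁, e₃]) f

def mulInvθ (θ : ℝ) (u v : H n) : H n :=
  (u.1 - v.1, u.2.1 - v.2.1, u.2.2 - v.2.2 - θ * ⟪u.1 - v.1, v.2.1⟫)

lemma convθ_eq_integral (θ : ℝ) (F G : H n → ℂ) (u : H n) :
    convθ θ F G u = ∫ v, F (mulInvθ θ u v) * G v := rfl

lemma hmul_hinv (u v : H n) : hmul u (hinv v) = mulInvθ 1 u v := by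
  simp only [hmul, hinv, mulInvθ, inner_neg_right, inner_sub_left, Prod.mk.injEq]
  refine ⟨by abel, by abel, by ring⟩

lemma conv1_eq_convθ_one (F G : H n → ℂ) : conv1 F G = convθ 1 F G := by
  ext u
  simp only [conv1, convθ_eq_integral, hmul_hinv]

lemma continuous_mulInvθ (θ : ℝ) (u : H n) : Continuous (mulInvθ θ u) := by
  unfold mulInvθ; fun_prop

lemma integrable_comp_mulInvθ_mul (θ : ℝ) (u : H n) (F G : 𝓢(H n, ℂ)) :
    Integrable (fun v => F (mulInvθ θ u v) * G v) :=
  G.integrable.bdd_mul (F.continuous.comp (continuous_mulInvθ θ u)).aestronglyMeasurable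
    (ae_of_all _ fun _ => F.norm_le_seminorm ℝ _)

def mulInvθDeriv (θ : ℝ) (v : H n) : H n →L[ℝ] H n :=
  .id ℝ (H n) - (θ • (innerSL ℝ v.2.1).comp (.fst ℝ (E n) (E n × ℝ))).smulRight (e₃ n)

lemma mulInvθDeriv_apply (θ : ℝ) (v w : H n) :
    mulInvθDeriv θ v w = w - (θ * ⟪v.2.1, w.1⟫) • e₃ n := by
  simp [mulInvθDeriv]

lemma mulInvθDeriv_e₃ (θ : ℝ) (v : H n) : mulInvθDeriv θ v (e₃ n) = e₃ n := by
  simp [mulInvθDeriv_apply, e₃]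

lemma norm_mulInvθDeriv_le (θ : ℝ) (v : H n) : ‖mulInvθDeriv θ v‖ ≤ 1 + |θ| * ‖v‖ := by
  refine ContinuousLinearMap.opNorm_le_bound _ (by positivity) fun w => ?_
  have hv : ‖v.2.1‖ ≤ ‖v‖ := (norm_fst_le v.2).trans (norm_snd_le v)
  calc ‖mulInvθDeriv θ v w‖ ≤ ‖w‖ + |θ| * (‖v.2.1‖ * ‖w.1‖) := by
        rw [mulInvθDeriv_apply]
        refine (norm_sub_le _ _).trans (add_le_add le_rfl ?_)
        rw [norm_smul, norm_e₃, mul_one, norm_mul, Real.norm_eq_abs, Real.norm_eq_abs]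
        exact mul_le_mul_of_nonneg_left (abs_real_inner_le_norm _ _) (abs_nonneg θ)
    _ ≤ (1 + |θ| * ‖v‖) * ‖w‖ := by
        have := mul_le_mul hv (norm_fst_le w) (norm_nonneg _) (norm_nonneg v)
        nlinarith [abs_nonneg θ]

lemma continuous_mulInvθDeriv (θ : ℝ) : Continuous (mulInvθDeriv (n := n) θ) := by
  unfold mulInvθDeriv; fun_prop

lemma hasFDerivAt_mulInvθ (θ : ℝ) (u v : H n) :
    HasFDerivAt (mulInvθ θ · v) (mulInvθDeriv θ v) u := by
  have h : (mulInvθ θ · v) = fun u => mulInvθDeriv θ v u + mulInvθ θ 0 v := by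
    ext u <;> simp [mulInvθ, mulInvθDeriv_apply, e₃, inner_sub_left, real_inner_comm] <;> ring
  rw [h]
  exact (mulInvθDeriv θ v).hasFDerivAt.add_const _

lemma hasDerivAt_mulInvθ_param (θ : ℝ) (u v : H n) :
    HasDerivAt (mulInvθ · u v) (-⟪u.1 - v.1, v.2.1⟫ • e₃ n) θ := by
  have h : (mulInvθ · u v) = fun θ => mulInvθ 0 u v + θ • (-⟪u.1 - v.1, v.2.1⟫ • e₃ n) := by
    ext θ <;> simp [mulInvθ, e₃]
    ring
  rw [h]
  exact (((hasDerivAt_id' θ).smul_const _).const_add _).congr_deriv (one_smul _ _)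

lemma norm_fderiv_comp_mulInvθ_le (θ : ℝ) (F G : 𝓢(H n, ℂ)) (u v : H n) :
    ‖G v • (fderiv ℝ F (mulInvθ θ u v)).comp (mulInvθDeriv θ v)‖
      ≤ SchwartzMap.seminorm ℝ 0 0 (fderivCLM ℝ (H n) ℂ F) * (1 + |θ| * ‖v‖) * ‖G v‖ := by
  have hF := (fderivCLM ℝ (H n) ℂ F).norm_le_seminorm ℝ (mulInvθ θ u v)
  rw [fderivCLM_apply] at hF
  calc ‖G v • (fderiv ℝ F (mulInvθ θ u v)).comp (mulInvθDeriv θ v)‖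
        ≤ ‖G v‖ * (‖fderiv ℝ F (mulInvθ θ u v)‖ * ‖mulInvθDeriv θ v‖) := by
        rw [norm_smul]; gcongr; exact ContinuousLinearMap.opNorm_comp_le _ _
    _ ≤ ‖G v‖ * (SchwartzMap.seminorm ℝ 0 0 (fderivCLM ℝ (H n) ℂ F) * (1 + |θ| * ‖v‖)) := by
        gcongr; exact norm_mulInvθDeriv_le θ v
    _ = _ := by ring

lemma integrable_fderiv_comp_mulInvθ (θ : ℝ) (F G : 𝓢(H n, ℂ)) (u : H n) :
    Integrable fun v => G v • (fderiv ℝ F (mulInvθ θ u v)).comp (mulInvθDeriv θ v) := by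
  have hcont :
      Continuous fun v => G v • (fderiv ℝ F (mulInvθ θ u v)).comp (mulInvθDeriv θ v) := by
    have := (F.smooth ⊤).continuous_fderiv (by simp)
    have := continuous_mulInvθ θ u
    have := continuous_mulInvθDeriv (n := n) θ
    fun_prop
  set M := SchwartzMap.seminorm ℝ 0 0 (fderivCLM ℝ (H n) ℂ F)
  refine (G.integrable_affine_mul_pow_mul_norm M (M * |θ|) 0).mono' hcont.aestronglyMeasurable
    (ae_of_all _ fun v => (norm_fderiv_comp_mulInvθ_le θ F G u v).trans_eq (by ring))

theorem hasFDerivAt_convθ (θ : ℝ) (F G : 𝓢(H n, ℂ)) (u : H n) :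
    HasFDerivAt (convθ θ F G)
      (∫ v, G v • (fderiv ℝ F (mulInvθ θ u v)).comp (mulInvθDeriv θ v)) u := by
  set M := SchwartzMap.seminorm ℝ 0 0 (fderivCLM ℝ (H n) ℂ F)
  refine hasFDerivAt_integral_of_dominated_of_fderiv_le univ_mem
    (Eventually.of_forall fun x => (integrable_comp_mulInvθ_mul θ x F G).aestronglyMeasurable)
    (integrable_comp_mulInvθ_mul θ u F G) (integrable_fderiv_comp_mulInvθ θ F G u).1
    (bound := fun v => (M + M * |θ| * ‖v‖) * (‖v‖ ^ 0 * ‖G v‖))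
    (ae_of_all _ fun v x _ => (norm_fderiv_comp_mulInvθ_le θ F G x v).trans_eq (by ring))
    (G.integrable_affine_mul_pow_mul_norm _ _ 0) (ae_of_all _ fun v x _ => ?_)
  exact ((F.hasFDerivAt _).comp x (hasFDerivAt_mulInvθ θ x v)).mul_const (G v)

theorem d3_convθ (θ : ℝ) (F G : 𝓢(H n, ℂ)) :
    d3 (convθ θ F G) = convθ θ ⇑(∂_{e₃ n} F : 𝓢(H n, ℂ)) G := by
  ext u
  rw [d3_apply, (hasFDerivAt_convθ θ F G u).fderiv,
    ContinuousLinearMap.integral_apply (integrable_fderiv_comp_mulInvθ θ F G u)]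
  simp [convθ_eq_integral, mulInvθDeriv_e₃, lineDerivOp_apply_eq_fderiv, mul_comm]

lemma hasDerivAt_comp_mulInvθ_param (F : 𝓢(H n, ℂ)) (u v : H n) (θ : ℝ) :
    HasDerivAt (fun θ => F (mulInvθ θ u v))
      (-⟪u.1 - v.1, v.2.1⟫ • ∂_{e₃ n} F (mulInvθ θ u v)) θ := by
  have h := (F.hasFDerivAt _).comp_hasDerivAt θ (hasDerivAt_mulInvθ_param θ u v)
  rwa [map_smul] at h

lemma norm_inner_smul_mul_le (F G : 𝓢(H n, ℂ)) (u v w : H n) :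
    ‖(-⟪u.1 - v.1, v.2.1⟫ • F w) * G v‖
      ≤ SchwartzMap.seminorm ℝ 0 0 F * ((‖u‖ + ‖v‖) * ‖v‖) * ‖G v‖ := by
  have hinner : |⟪u.1 - v.1, v.2.1⟫| ≤ (‖u‖ + ‖v‖) * ‖v‖ :=
    (abs_real_inner_le_norm _ _).trans <| mul_le_mul
      ((norm_sub_le _ _).trans (add_le_add (norm_fst_le u) (norm_fst_le v)))
      ((norm_fst_le v.2).trans (norm_snd_le v)) (norm_nonneg _) (by positivity)
  rw [norm_mul, norm_smul, norm_neg, Real.norm_eq_abs]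
  calc |⟪u.1 - v.1, v.2.1⟫| * ‖F w‖ * ‖G v‖
      ≤ (‖u‖ + ‖v‖) * ‖v‖ * SchwartzMap.seminorm ℝ 0 0 F * ‖G v‖ := by
        gcongr; exact F.norm_le_seminorm ℝ w
    _ = _ := by ring

theorem hasDerivAt_convθ_param (F G : 𝓢(H n, ℂ)) (u : H n) (θ₀ : ℝ) :
    HasDerivAt (convθ · F G u) (-∑ j, d3 (convθ θ₀ (T₁ j F) (T₂ j G)) u) θ₀ := by
  set M := SchwartzMap.seminorm ℝ 0 0 (∂_{e₃ n} F)
  have hcont :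
      Continuous fun v => (-⟪u.1 - v.1, v.2.1⟫ • ∂_{e₃ n} F (mulInvθ θ₀ u v)) * G v := by
    have := continuous_mulInvθ θ₀ u
    fun_prop
  have hderiv := (hasDerivAt_integral_of_dominated_loc_of_deriv_le univ_mem
    (F' := fun θ v => (-⟪u.1 - v.1, v.2.1⟫ • ∂_{e₃ n} F (mulInvθ θ u v)) * G v)
    (Eventually.of_forall fun θ => (integrable_comp_mulInvθ_mul θ u F G).aestronglyMeasurable)
    (integrable_comp_mulInvθ_mul θ₀ u F G) hcont.aestronglyMeasurable
    (bound := fun v => (M * ‖u‖ + M * ‖v‖) * (‖v‖ ^ 1 * ‖G v‖))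
    (ae_of_all _ fun v θ _ => (norm_inner_smul_mul_le _ G u v _).trans_eq (by ring))
    (G.integrable_affine_mul_pow_mul_norm _ _ 1)
    (ae_of_all _ fun v θ _ => (hasDerivAt_comp_mulInvθ_param F u v θ).mul_const (G v))).2
  have hexpand : ∀ v, (-⟪u.1 - v.1, v.2.1⟫ • ∂_{e₃ n} F (mulInvθ θ₀ u v)) * G v
      = -∑ j, T₁ j (∂_{e₃ n} F) (mulInvθ θ₀ u v) * T₂ j G v := by
    intro v
    have hinner : ⟪u.1 - v.1, v.2.1⟫ = ∑ j, (u.1 - v.1) j * v.2.1 j := by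
      simp [PiLp.inner_apply, mul_comm]
    rw [hinner, Complex.real_smul, ← Finset.sum_neg_distrib]
    push_cast
    rw [Finset.sum_mul, Finset.sum_mul, ← Finset.sum_neg_distrib]
    refine Finset.sum_congr rfl fun j _ => ?_
    simp only [coe_T₁, coe_T₂, mulInvθ]
    ring
  refine hderiv.congr_deriv ?_
  simp_rw [hexpand, integral_neg]
  rw [integral_finsetSum _ fun j _ => integrable_comp_mulInvθ_mul θ₀ u _ _]
  simp [d3_convθ, lineDerivOp_e₃_T₁, convθ_eq_integral]

theorem continuous_convθ_param (F G : 𝓢(H n, ℂ)) (u : H n) :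
    Continuous (convθ · F G u) :=
  continuous_iff_continuousAt.2 fun θ => (hasDerivAt_convθ_param F G u θ).continuousAt

theorem hasDerivAt_d3_convθ_param (F G : 𝓢(H n, ℂ)) (u : H n) (θ₀ : ℝ) :
    HasDerivAt (fun θ => d3 (convθ θ F G) u)
      (-∑ k, d3 (d3 (convθ θ₀ (T₁ k F) (T₂ k G))) u) θ₀ := by
  have h := hasDerivAt_convθ_param (∂_{e₃ n} F) G u θ₀
  simp_rw [d3_convθ, lineDerivOp_e₃_T₁] at h ⊢
  exact h

end Heisenberg

open Heisenberg

/-- Second order Taylor formula for the Heisenberg convolution: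
`f *₁ g = f *₀ g − Σ_j ∂₃(T_{1j}f *₀ T_{2j}g)
  + ∫₀¹ (1−θ) Σ_{j,k} ∂₃²(T_{1j}T_{1k}f *_θ T_{2j}T_{2k}g) dθ`. -/
theorem statement4 (n : ℕ) (f g : SchwartzMap (H n) ℂ) (u : H n) :
    conv1 (⇑f) (⇑g) u
      = convθ 0 (⇑f) (⇑g) u
        - ∑ j : Fin n,
            d3 (convθ 0 (fun w => (w.1 j : ℂ) * f w) (fun w => (w.2.1 j : ℂ) * g w)) u
        + ∫ θ in (0:ℝ)..1, (1 - (θ:ℂ)) *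
            ∑ j : Fin n, ∑ k : Fin n,
              d3 (d3 (convθ θ
                (fun w => (w.1 j : ℂ) * ((w.1 k : ℂ) * f w))
                (fun w => (w.2.1 j : ℂ) * ((w.2.1 k : ℂ) * g w)))) u := by
  have h₁ : ∀ θ, HasDerivAt (convθ · f g u) (-∑ j, d3 (convθ θ (T₁ j f) (T₂ j g)) u) θ :=
    hasDerivAt_convθ_param f g u
  have h₂ : ∀ θ, HasDerivAt (fun θ => -∑ j, d3 (convθ θ (T₁ j f) (T₂ j g)) u)
      (∑ j, ∑ k, d3 (d3 (convθ θ (T₁ j (T₁ k f)) (T₂ j (T₂ k g)))) u) θ := fun θ => by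
    rw [Finset.sum_comm]
    simpa using (HasDerivAt.fun_sum fun j _ =>
      hasDerivAt_d3_convθ_param (T₁ j f) (T₂ j g) u θ).fun_neg
  have h₂_cont : Continuous fun θ =>
      ∑ j, ∑ k, d3 (d3 (convθ θ (T₁ j (T₁ k f)) (T₂ j (T₂ k g)))) u := by
    simp_rw [d3_convθ]
    exact continuous_finsetSum _ fun j _ => continuous_finsetSum _ fun k _ =>
      continuous_convθ_param _ _ u
  have key := taylor_integral_remainder_one_of_hasDerivAt (fun θ _ => h₁ θ) (fun θ _ => h₂ θ)
    h₂_cont.continuousOn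
  simp only [coe_T₁, coe_T₂] at key
  rw [conv1_eq_convθ_one, key, sub_eq_add_neg]
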